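/- arXiv:solv-int/9910010 — 4 statements merged into one kernel-verified Lean document; each statement's English description precedes it below -/
import Mathlib

section
/- Let λ_k, λ_l ∈ ℂ with ½(λ_k−λ_l) ∉ L and w_a(½(λ_k−λ_l)) ≠ 0 for a = 1,2,3, and let G be an invertible 2×2 complex matrix with columns g and h. Define J_a := −tr(G σ₃ G⁻¹ σ_a)/(4 w_a(½(λ_k−λ_l))), so that Σ_a J_a w_a(½(λ_k−λ_l)) σ_a = −½ G σ₃ G⁻¹, and set f(λ) := ½I + Σ_{a=1}^{3} J_a w_a(λ − ½(λ_k+λ_l)) σ_a. Then f(λ_k)·g = 0 and f(λ_l)·h = 0. (In particular det f(λ_k) = det f(λ_l) = 0; this is the key local property of the multiplier of the elementary elliptic Schlesinger transformation of Theorem 3.3.) -/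
open Complex Matrix

noncomputable section

/-- Membership in the lattice `L = ℤ + μℤ`. -/
def inLattice (μ lam : ℂ) : Prop := ∃ m n : ℤ, lam = (m : ℂ) + (n : ℂ) * μ

/-- Jacobi theta function `θ₁`. -/
noncomputable def theta1 (μ lam : ℂ) : ℂ :=
  -∑' m : ℤ, Complex.exp ((Real.pi : ℂ) * Complex.I * μ * ((m : ℂ) + 1/2)^2
      + 2 * (Real.pi : ℂ) * Complex.I * ((m : ℂ) + 1/2) * (lam + 1/2))

/-- Jacobi theta function `θ₂`. -/
noncomputable def theta2 (μ lam : ℂ) : ℂ :=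
  ∑' m : ℤ, Complex.exp ((Real.pi : ℂ) * Complex.I * μ * ((m : ℂ) + 1/2)^2
      + 2 * (Real.pi : ℂ) * Complex.I * ((m : ℂ) + 1/2) * lam)

/-- Jacobi theta function `θ₃`. -/
noncomputable def theta3 (μ lam : ℂ) : ℂ :=
  ∑' m : ℤ, Complex.exp ((Real.pi : ℂ) * Complex.I * μ * (m : ℂ)^2
      + 2 * (Real.pi : ℂ) * Complex.I * (m : ℂ) * lam)

/-- Jacobi theta function `θ₄`. -/
noncomputable def theta4 (μ lam : ℂ) : ℂ :=
  ∑' m : ℤ, Complex.exp ((Real.pi : ℂ) * Complex.I * μ * (m : ℂ)^2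
      + 2 * (Real.pi : ℂ) * Complex.I * (m : ℂ) * (lam + 1/2))

/-- `w₁(λ) = π θ₂ θ₃ θ₄(λ)/θ₁(λ)`. -/
noncomputable def w1 (μ lam : ℂ) : ℂ :=
  (Real.pi : ℂ) * theta2 μ 0 * theta3 μ 0 * theta4 μ lam / theta1 μ lam

/-- `w₂(λ) = π θ₂ θ₄ θ₃(λ)/θ₁(λ)`. -/
noncomputable def w2 (μ lam : ℂ) : ℂ :=
  (Real.pi : ℂ) * theta2 μ 0 * theta4 μ 0 * theta3 μ lam / theta1 μ lam

/-- `w₃(λ) = π θ₃ θ₄ θ₂(λ)/θ₁(λ)`. -/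
noncomputable def w3 (μ lam : ℂ) : ℂ :=
  (Real.pi : ℂ) * theta3 μ 0 * theta4 μ 0 * theta2 μ lam / theta1 μ lam

/-- The three functions `w₁, w₂, w₃` indexed by `Fin 3`. -/
noncomputable def wA (μ : ℂ) : Fin 3 → ℂ → ℂ := ![w1 μ, w2 μ, w3 μ]

/-- `𝒵₁(λ) = (w₁(λ)/(2πi)) θ₄′(λ)/θ₄(λ)`. -/
noncomputable def Z1 (μ lam : ℂ) : ℂ :=
  w1 μ lam / (2 * (Real.pi : ℂ) * Complex.I) * (deriv (theta4 μ) lam / theta4 μ lam)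

/-- `𝒵₂(λ) = (w₂(λ)/(2πi)) θ₃′(λ)/θ₃(λ)`. -/
noncomputable def Z2 (μ lam : ℂ) : ℂ :=
  w2 μ lam / (2 * (Real.pi : ℂ) * Complex.I) * (deriv (theta3 μ) lam / theta3 μ lam)

/-- `𝒵₃(λ) = (w₃(λ)/(2πi)) θ₂′(λ)/θ₂(λ)`. -/
noncomputable def Z3 (μ lam : ℂ) : ℂ :=
  w3 μ lam / (2 * (Real.pi : ℂ) * Complex.I) * (deriv (theta2 μ) lam / theta2 μ lam)

/-- The three functions `𝒵₁, 𝒵₂, 𝒵₃` indexed by `Fin 3`. -/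
noncomputable def ZA (μ : ℂ) : Fin 3 → ℂ → ℂ := ![Z1 μ, Z2 μ, Z3 μ]

/-- The Pauli matrix `σ₁`. -/
def sigma1 : Matrix (Fin 2) (Fin 2) ℂ := !![0, 1; 1, 0]

/-- The Pauli matrix `σ₂`. -/
def sigma2 : Matrix (Fin 2) (Fin 2) ℂ := !![0, Complex.I; -Complex.I, 0]

/-- The Pauli matrix `σ₃`. -/
def sigma3 : Matrix (Fin 2) (Fin 2) ℂ := !![1, 0; 0, -1]

/-- The Pauli matrices indexed by `Fin 3`. -/
def pauli : Fin 3 → Matrix (Fin 2) (Fin 2) ℂ := ![sigma1, sigma2, sigma3]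

/-- The 2×2 matrix with prescribed columns `g` and `h`. -/
def colMatrix (g h : Fin 2 → ℂ) : Matrix (Fin 2) (Fin 2) ℂ :=
  Matrix.of fun r c => if c = 0 then g r else h r

end


lemma theta3_neg (μ lam : ℂ) : theta3 μ (-lam) = theta3 μ lam := by
  unfold theta3
  calc ∑' m : ℤ, Complex.exp ((Real.pi : ℂ) * Complex.I * μ * ((m:ℤ) : ℂ)^2
      + 2 * (Real.pi : ℂ) * Complex.I * ((m:ℤ) : ℂ) * (-lam))
      = ∑' m : ℤ, (fun k : ℤ => Complex.exp ((Real.pi : ℂ) * Complex.I * μ * ((k : ℤ) : ℂ)^2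
      + 2 * (Real.pi : ℂ) * Complex.I * ((k : ℤ) : ℂ) * lam)) ((Equiv.neg ℤ) m) := by
        refine tsum_congr fun m => ?_
        simp only [Equiv.neg_apply]
        congr 1
        push_cast
        ring
    _ = _ := (Equiv.neg ℤ).tsum_eq (fun k : ℤ => Complex.exp ((Real.pi : ℂ) * Complex.I * μ * ((k : ℤ) : ℂ)^2
      + 2 * (Real.pi : ℂ) * Complex.I * ((k : ℤ) : ℂ) * lam))

lemma theta2_neg (μ lam : ℂ) : theta2 μ (-lam) = theta2 μ lam := by
  unfold theta2
  calc ∑' m : ℤ, Complex.exp ((Real.pi : ℂ) * Complex.I * μ * (((m:ℤ) : ℂ) + 1/2)^2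
      + 2 * (Real.pi : ℂ) * Complex.I * (((m:ℤ) : ℂ) + 1/2) * (-lam))
      = ∑' m : ℤ, (fun k : ℤ => Complex.exp ((Real.pi : ℂ) * Complex.I * μ * (((k:ℤ) : ℂ) + 1/2)^2
      + 2 * (Real.pi : ℂ) * Complex.I * (((k:ℤ) : ℂ) + 1/2) * lam)) ((Equiv.subLeft (-1 : ℤ)) m) := by
        refine tsum_congr fun m => ?_
        simp only [Equiv.subLeft_apply]
        congr 1
        push_cast
        ring
    _ = _ := (Equiv.subLeft (-1 : ℤ)).tsum_eq (fun k : ℤ => Complex.exp ((Real.pi : ℂ) * Complex.I * μ * (((k:ℤ) : ℂ) + 1/2)^2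
      + 2 * (Real.pi : ℂ) * Complex.I * (((k:ℤ) : ℂ) + 1/2) * lam))

lemma theta4_neg (μ lam : ℂ) : theta4 μ (-lam) = theta4 μ lam := by
  unfold theta4
  calc ∑' m : ℤ, Complex.exp ((Real.pi : ℂ) * Complex.I * μ * ((m:ℤ) : ℂ)^2
      + 2 * (Real.pi : ℂ) * Complex.I * ((m:ℤ) : ℂ) * (-lam + 1/2))
      = ∑' m : ℤ, (fun k : ℤ => Complex.exp ((Real.pi : ℂ) * Complex.I * μ * ((k : ℤ) : ℂ)^2
      + 2 * (Real.pi : ℂ) * Complex.I * ((k : ℤ) : ℂ) * (lam + 1/2))) ((Equiv.neg ℤ) m) := by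
        refine tsum_congr fun m => ?_
        simp only [Equiv.neg_apply]
        have harg : (Real.pi : ℂ) * Complex.I * μ * ((m:ℂ))^2
            + 2 * (Real.pi : ℂ) * Complex.I * ((m:ℂ)) * (-lam + 1/2)
            = ((Real.pi : ℂ) * Complex.I * μ * (((-m : ℤ) : ℂ))^2
            + 2 * (Real.pi : ℂ) * Complex.I * (((-m : ℤ) : ℂ)) * (lam + 1/2))
            + ((m : ℂ) * (2 * Real.pi * Complex.I)) := by
          push_cast; ring
        rw [harg, Complex.exp_add, Complex.exp_int_mul_two_pi_mul_I, mul_one]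
    _ = _ := (Equiv.neg ℤ).tsum_eq (fun k : ℤ => Complex.exp ((Real.pi : ℂ) * Complex.I * μ * ((k : ℤ) : ℂ)^2
      + 2 * (Real.pi : ℂ) * Complex.I * ((k : ℤ) : ℂ) * (lam + 1/2)))

lemma theta1_neg (μ lam : ℂ) : theta1 μ (-lam) = -theta1 μ lam := by
  unfold theta1
  have hsum : ∑' m : ℤ, Complex.exp ((Real.pi : ℂ) * Complex.I * μ * (((m:ℤ) : ℂ) + 1/2)^2
      + 2 * (Real.pi : ℂ) * Complex.I * (((m:ℤ) : ℂ) + 1/2) * (-lam + 1/2))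
      = -∑' m : ℤ, Complex.exp ((Real.pi : ℂ) * Complex.I * μ * (((m:ℤ) : ℂ) + 1/2)^2
      + 2 * (Real.pi : ℂ) * Complex.I * (((m:ℤ) : ℂ) + 1/2) * (lam + 1/2)) := by
    calc ∑' m : ℤ, Complex.exp ((Real.pi : ℂ) * Complex.I * μ * (((m:ℤ) : ℂ) + 1/2)^2
      + 2 * (Real.pi : ℂ) * Complex.I * (((m:ℤ) : ℂ) + 1/2) * (-lam + 1/2))
        = ∑' m : ℤ, -(fun k : ℤ => Complex.exp ((Real.pi : ℂ) * Complex.I * μ * (((k:ℤ) : ℂ) + 1/2)^2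
      + 2 * (Real.pi : ℂ) * Complex.I * (((k:ℤ) : ℂ) + 1/2) * (lam + 1/2))) ((Equiv.subLeft (-1 : ℤ)) m) := by
          refine tsum_congr fun m => ?_
          simp only [Equiv.subLeft_apply]
          have harg : (Real.pi : ℂ) * Complex.I * μ * (((m:ℤ) : ℂ) + 1/2)^2
              + 2 * (Real.pi : ℂ) * Complex.I * (((m:ℤ) : ℂ) + 1/2) * (-lam + 1/2)
              = ((Real.pi : ℂ) * Complex.I * μ * (((-1 - m : ℤ) : ℂ) + 1/2)^2
              + 2 * (Real.pi : ℂ) * Complex.I * (((-1 - m : ℤ) : ℂ) + 1/2) * (lam + 1/2))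
              + (((m : ℂ)) * (2 * Real.pi * Complex.I) + Real.pi * Complex.I) := by
            push_cast; ring
          have h2 : Complex.exp (((m:ℤ) : ℂ) * (2 * Real.pi * Complex.I) + Real.pi * Complex.I) = -1 := by
            rw [Complex.exp_add, Complex.exp_int_mul_two_pi_mul_I, Complex.exp_pi_mul_I, one_mul]
          rw [harg, Complex.exp_add, h2]
          ring
      _ = -∑' m : ℤ, (fun k : ℤ => Complex.exp ((Real.pi : ℂ) * Complex.I * μ * (((k:ℤ) : ℂ) + 1/2)^2
      + 2 * (Real.pi : ℂ) * Complex.I * (((k:ℤ) : ℂ) + 1/2) * (lam + 1/2))) ((Equiv.subLeft (-1 : ℤ)) m) := tsum_neg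
      _ = _ := by rw [(Equiv.subLeft (-1 : ℤ)).tsum_eq (fun k : ℤ => Complex.exp ((Real.pi : ℂ) * Complex.I * μ * (((k:ℤ) : ℂ) + 1/2)^2
      + 2 * (Real.pi : ℂ) * Complex.I * (((k:ℤ) : ℂ) + 1/2) * (lam + 1/2)))]
  rw [hsum, neg_neg]


lemma w1_neg (μ lam : ℂ) : w1 μ (-lam) = -w1 μ lam := by
  unfold w1; rw [theta4_neg, theta1_neg, div_neg]

lemma w2_neg (μ lam : ℂ) : w2 μ (-lam) = -w2 μ lam := by
  unfold w2; rw [theta3_neg, theta1_neg, div_neg]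

lemma w3_neg (μ lam : ℂ) : w3 μ (-lam) = -w3 μ lam := by
  unfold w3; rw [theta2_neg, theta1_neg, div_neg]

lemma wA_neg (μ : ℂ) (a : Fin 3) (lam : ℂ) : wA μ a (-lam) = -wA μ a lam := by
  fin_cases a <;> simp [wA, w1_neg, w2_neg, w3_neg]

lemma pauli_decomp (A : Matrix (Fin 2) (Fin 2) ℂ) :
    ∑ a : Fin 3, Matrix.trace (A * pauli a) • pauli a = (2:ℂ) • A - Matrix.trace A • 1 := by
  ext i j
  fin_cases i <;> fin_cases j <;>
    simp [pauli, sigma1, sigma2, sigma3, Fin.sum_univ_three, Matrix.trace_fin_two,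
      Matrix.mul_apply, Fin.sum_univ_two, Matrix.one_apply] <;> (try ring) <;>
      (ring_nf; simp only [Complex.I_sq]; ring)

lemma colMatrix_e0 (g h : Fin 2 → ℂ) : (colMatrix g h).mulVec ![1,0] = g := by
  funext r
  simp [colMatrix, Matrix.mulVec, dotProduct, Fin.sum_univ_two]

lemma colMatrix_e1 (g h : Fin 2 → ℂ) : (colMatrix g h).mulVec ![0,1] = h := by
  funext r
  simp [colMatrix, Matrix.mulVec, dotProduct, Fin.sum_univ_two]

lemma sigma3_e0 : sigma3.mulVec ![1,0] = ![1,0] := by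
  funext i; fin_cases i <;> simp [sigma3, Matrix.mulVec, dotProduct, Fin.sum_univ_two]

lemma sigma3_e1 : sigma3.mulVec ![0,1] = -![0,1] := by
  funext i; fin_cases i <;> simp [sigma3, Matrix.mulVec, dotProduct, Fin.sum_univ_two]


/-- the multiplier `f(λ) = ½I + Σ_a J_a w_a(λ − ½(λ_k+λ_l)) σ_a` of the
elementary elliptic Schlesinger transformation, with
`J_a = −tr(G σ₃ G⁻¹ σ_a)/(4 w_a(½(λ_k−λ_l)))`, annihilates the first column `g` of `G`
at `λ = λ_k` and the second column `h` of `G` at `λ = λ_l`. -/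
theorem f_annihilates_columns (μ : ℂ) (hμ : 0 < μ.im) (lk ll : ℂ)
    (hkl : ¬ inLattice μ ((lk - ll) / 2))
    (hw : ∀ a : Fin 3, wA μ a ((lk - ll) / 2) ≠ 0)
    (g h : Fin 2 → ℂ) (hG : (colMatrix g h).det ≠ 0)
    (J : Fin 3 → ℂ)
    (hJ : ∀ a : Fin 3, J a =
      -Matrix.trace (colMatrix g h * sigma3 * (colMatrix g h)⁻¹ * pauli a)
        / (4 * wA μ a ((lk - ll) / 2)))
    (f : ℂ → Matrix (Fin 2) (Fin 2) ℂ)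
    (hf : ∀ lam : ℂ, f lam = (1/2 : ℂ) • (1 : Matrix (Fin 2) (Fin 2) ℂ)
        + ∑ a : Fin 3, (J a * wA μ a (lam - (lk + ll) / 2)) • pauli a) :
    (f lk).mulVec g = 0 ∧ (f ll).mulVec h = 0 := by
  have hinv : (colMatrix g h)⁻¹ * colMatrix g h = 1 :=
    Matrix.nonsing_inv_mul _ (Ne.isUnit hG)
  set M : Matrix (Fin 2) (Fin 2) ℂ := colMatrix g h * sigma3 * (colMatrix g h)⁻¹ with hM
  have htr : Matrix.trace M = 0 := by
    rw [hM, Matrix.trace_mul_comm, ← Matrix.mul_assoc, hinv, Matrix.one_mul]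
    simp [sigma3, Matrix.trace_fin_two]
  have hMg : M.mulVec g = g := by
    calc M.mulVec g
        = (colMatrix g h * sigma3).mulVec
            ((colMatrix g h)⁻¹.mulVec ((colMatrix g h).mulVec ![1,0])) := by
          rw [colMatrix_e0, hM, ← Matrix.mulVec_mulVec]
      _ = (colMatrix g h).mulVec (sigma3.mulVec ![1,0]) := by
          simp only [Matrix.mulVec_mulVec, Matrix.mul_assoc, hinv, Matrix.mul_one]
      _ = g := by rw [sigma3_e0, colMatrix_e0]
  have hMh : M.mulVec h = -h := by
    calc M.mulVec h
        = (colMatrix g h * sigma3).mulVec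
            ((colMatrix g h)⁻¹.mulVec ((colMatrix g h).mulVec ![0,1])) := by
          rw [colMatrix_e1, hM, ← Matrix.mulVec_mulVec]
      _ = (colMatrix g h).mulVec (sigma3.mulVec ![0,1]) := by
          simp only [Matrix.mulVec_mulVec, Matrix.mul_assoc, hinv, Matrix.mul_one]
      _ = -h := by rw [sigma3_e1, Matrix.mulVec_neg, colMatrix_e1]
  have hcoef : ∀ a : Fin 3, J a * wA μ a ((lk - ll)/2)
      = (-(1/4) : ℂ) * Matrix.trace (M * pauli a) := by
    intro a
    rw [hJ a]
    have hwa := hw a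
    field_simp
  have hcoef' : ∀ a : Fin 3, J a * wA μ a (-((lk - ll)/2))
      = ((1/4) : ℂ) * Matrix.trace (M * pauli a) := by
    intro a
    rw [wA_neg, mul_neg, hcoef a]
    ring
  have hfk : f lk = (1/2 : ℂ) • (1 - M) := by
    rw [hf lk]
    have e1 : lk - (lk + ll)/2 = (lk - ll)/2 := by ring
    simp only [e1]
    rw [show (∑ a : Fin 3, (J a * wA μ a ((lk - ll)/2)) • pauli a)
        = ∑ a : Fin 3, ((-(1/4):ℂ) * Matrix.trace (M * pauli a)) • pauli a from
        Finset.sum_congr rfl fun a _ => by rw [hcoef a]]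
    simp only [mul_smul]
    rw [← Finset.smul_sum, pauli_decomp, htr, zero_smul, sub_zero, smul_smul, smul_sub]
    module
  have hfl : f ll = (1/2 : ℂ) • (1 + M) := by
    rw [hf ll]
    have e2 : ll - (lk + ll)/2 = -((lk - ll)/2) := by ring
    simp only [e2]
    rw [show (∑ a : Fin 3, (J a * wA μ a (-((lk - ll)/2))) • pauli a)
        = ∑ a : Fin 3, (((1/4):ℂ) * Matrix.trace (M * pauli a)) • pauli a from
        Finset.sum_congr rfl fun a _ => by rw [hcoef' a]]
    simp only [mul_smul]
    rw [← Finset.smul_sum, pauli_decomp, htr, zero_smul, sub_zero, smul_smul, smul_add]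
    module
  constructor
  · rw [hfk, Matrix.smul_mulVec, Matrix.sub_mulVec, Matrix.one_mulVec, hMg]
    simp
  · rw [hfl, Matrix.smul_mulVec, Matrix.add_mulVec, Matrix.one_mulVec, hMh]
    simp
end

section
/- (Transformation of the τ-function under an elementary Schlesinger transformation on the Riemann sphere.) Let U ⊂ ℂᴺ be an open set on which the coordinates λ₁,…,λ_N are pairwise distinct, and fix indices k ≠ l. Let A₁,…,A_N : U → M₂(ℂ) be holomorphic and traceless, and let g, h : U → ℂ² be holomorphic such that the 2×2 matrix G with columns g, h is invertible on U and: ∂g/∂λ_j = A_j g/(λ_j−λ_k) for j ≠ k, ∂g/∂λ_k = −Σ_{i≠k} A_i g/(λ_i−λ_k), ∂h/∂λ_j = A_j h/(λ_j−λ_l) for j ≠ l, ∂h/∂λ_l = −Σ_{i≠l} A_i h/(λ_i−λ_l). Set S_± := G P_± G⁻¹, A(λ) := Σ_j A_j/(λ−λ_j), Φ(λ) := ½(1/(λ−λ_k) − 1/(λ−λ_l))(S₊ − S₋), and for each j define D_j := (1/(4πi)) ∮_{|λ−λ_j|=ε} (2 tr[Φ(λ)A(λ)] + tr[Φ(λ)²])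 dλ (counterclockwise), with 0 < ε < min_{i≠j}|λ_i−λ_j|. Then D_j = (∂_{λ_j} det G)/det G for j ∉ {k,l}, D_k = (∂_{λ_k} det G)/det G − 1/(2(λ_k−λ_l)), and D_l = (∂_{λ_l} det G)/det G + 1/(2(λ_k−λ_l)). (D_j equals Ĥ_j − H_j, the change of the j-th Schlesinger Hamiltonian under the elementary Schlesinger transformation with multiplier F(λ) = ((λ−λ_k)/(λ−λ_l))^{1/2} S₊ + ((λ−λ_l)/(λ−λ_k))^{1/2} S₋, since Φ = F⁻¹dF/dλ; equivalently the transformed τ-function is τ̂ = (λ_k−λ_l)^{−1/2} det G · τ.) -/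
open Complex Matrix

/-- The diagonal projection `P₊`. -/
def Pplus : Matrix (Fin 2) (Fin 2) ℂ := !![1, 0; 0, 0]

/-- The diagonal projection `P₋`. -/
def Pminus : Matrix (Fin 2) (Fin 2) ℂ := !![0, 0; 0, 1]


open Metric in
lemma cInt_inv_in {c w : ℂ} {ε : ℝ} (h : ‖w - c‖ < ε) :
    (∮ z in C(c, ε), (z - w)⁻¹) = 2 * Real.pi * Complex.I :=
  circleIntegral.integral_sub_inv_of_mem_ball (by simpa [Complex.dist_eq] using h)

open Metric in
lemma cIntegrable_inv {c w : ℂ} {ε : ℝ} (h : ‖w - c‖ ≠ ε) (hε : 0 ≤ ε) :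
    CircleIntegrable (fun z => (z - w)⁻¹) c ε := by
  rw [circleIntegrable_sub_inv_iff]
  right
  simp [Complex.dist_eq, _root_.abs_of_nonneg hε, h]

open Metric in
lemma sub_ne_of_closedBall {c w z : ℂ} {ε : ℝ} (h : ε < ‖w - c‖)
    (hz : z ∈ closedBall c ε) : z - w ≠ 0 := by
  intro h0
  rw [sub_eq_zero] at h0
  subst h0
  rw [mem_closedBall, Complex.dist_eq] at hz
  exact absurd hz (not_le.mpr h)

open Metric in
lemma cInt_inv_out {c w : ℂ} {ε : ℝ} (hε : 0 ≤ ε) (h : ε < ‖w - c‖) :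
    (∮ z in C(c, ε), (z - w)⁻¹) = 0 := by
  apply Complex.circleIntegral_eq_zero_of_differentiable_on_off_countable hε Set.countable_empty
  · intro z hz
    exact (ContinuousAt.continuousWithinAt
      ((continuousAt_id.sub continuousAt_const).inv₀ (sub_ne_of_closedBall h hz)))
  · intro z hz
    exact (differentiableAt_id.sub (differentiableAt_const _)).inv
      (sub_ne_of_closedBall h (ball_subset_closedBall hz.1))

lemma cInt_inv_sq (c w : ℂ) (ε : ℝ) :
    (∮ z in C(c, ε), (z - w)⁻¹ * (z - w)⁻¹) = 0 := by
  have : ∀ z : ℂ, (z - w)⁻¹ * (z - w)⁻¹ = (z - w) ^ (-2 : ℤ) := by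
    intro z; rw [_root_.zpow_neg, zpow_two, mul_inv]
  simp only [this]
  exact circleIntegral.integral_sub_zpow_of_ne (by decide) c w ε

open Metric in
lemma sub_ne_of_sphere {c w z : ℂ} {ε : ℝ} (h : ‖w - c‖ ≠ ε)
    (hz : z ∈ sphere c ε) : z - w ≠ 0 := by
  intro h0
  rw [sub_eq_zero] at h0
  subst h0
  rw [mem_sphere, Complex.dist_eq] at hz
  exact h hz

open Metric in
lemma contOn_inv {c w : ℂ} {ε : ℝ} (h : ‖w - c‖ ≠ ε) :
    ContinuousOn (fun z : ℂ => (z - w)⁻¹) (sphere c ε) := fun z hz =>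
  ((continuousAt_id.sub continuousAt_const).inv₀ (sub_ne_of_sphere h hz)).continuousWithinAt

lemma cIntegrable_prod {c a w : ℂ} {ε : ℝ} (hε : 0 ≤ ε) (ha : ‖a - c‖ ≠ ε)
    (hw : ‖w - c‖ ≠ ε) :
    CircleIntegrable (fun z => (z - a)⁻¹ * (z - w)⁻¹) c ε :=
  ContinuousOn.circleIntegrable hε ((contOn_inv ha).mul (contOn_inv hw))

open Metric in
lemma cInt_prod {c a w : ℂ} {ε : ℝ} (hε : 0 ≤ ε) (hab : a ≠ w)
    (ha : ‖a - c‖ ≠ ε) (hw : ‖w - c‖ ≠ ε) :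
    (∮ z in C(c, ε), (z - a)⁻¹ * (z - w)⁻¹) =
      (a - w)⁻¹ * ((∮ z in C(c, ε), (z - a)⁻¹) - ∮ z in C(c, ε), (z - w)⁻¹) := by
  have heq : Set.EqOn (fun z => (z - a)⁻¹ * (z - w)⁻¹)
      (fun z => (a - w)⁻¹ * ((z - a)⁻¹ - (z - w)⁻¹)) (sphere c ε) := by
    intro z hz
    have h1 : z - a ≠ 0 := sub_ne_of_sphere ha hz
    have h2 : z - w ≠ 0 := sub_ne_of_sphere hw hz
    have h3 : a - w ≠ 0 := sub_ne_zero.mpr hab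
    field_simp
    ring
  rw [circleIntegral.integral_congr hε heq, circleIntegral.integral_const_mul,
    circleIntegral.integral_sub (cIntegrable_inv ha hε) (cIntegrable_inv hw hε)]

lemma cInt_add {f g : ℂ → ℂ} {c : ℂ} {ε : ℝ} (hf : CircleIntegrable f c ε)
    (hg : CircleIntegrable g c ε) :
    (∮ z in C(c, ε), (f z + g z)) = (∮ z in C(c, ε), f z) + ∮ z in C(c, ε), g z := by
  simp only [circleIntegral, smul_add, intervalIntegral.integral_add hf.out hg.out]

lemma cInt_finset_sum {ι : Type*} (s : Finset ι) (f : ι → ℂ → ℂ) (c : ℂ) (ε : ℝ)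
    (h : ∀ i ∈ s, CircleIntegrable (f i) c ε) :
    (∮ z in C(c, ε), ∑ i ∈ s, f i z) = ∑ i ∈ s, ∮ z in C(c, ε), f i z := by
  simp only [circleIntegral, smul_eq_mul, Finset.mul_sum]
  exact intervalIntegral.integral_finset_sum fun i hi => by
    simpa [smul_eq_mul] using (h i hi).out

lemma cInt_total {N : ℕ} (p : Fin N → ℂ) (k l : Fin N) (t : Fin N → ℂ) (c : ℂ) (ε : ℝ)
    (hε : 0 < ε) (hoff : ∀ i, ‖p i - c‖ ≠ ε) :
    (∮ z in C(c, ε),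
      ((∑ i, t i * ((z - p k)⁻¹ * (z - p i)⁻¹ - (z - p l)⁻¹ * (z - p i)⁻¹))
        + (2⁻¹ * ((z - p k)⁻¹ * (z - p k)⁻¹) + 2⁻¹ * ((z - p l)⁻¹ * (z - p l)⁻¹)
            - (z - p k)⁻¹ * (z - p l)⁻¹)))
    = (∑ i, t i * ((∮ z in C(c, ε), (z - p k)⁻¹ * (z - p i)⁻¹)
        - ∮ z in C(c, ε), (z - p l)⁻¹ * (z - p i)⁻¹))
      - ∮ z in C(c, ε), (z - p k)⁻¹ * (z - p l)⁻¹ := by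
  have hS : CircleIntegrable
      (fun z => ∑ i, t i * ((z - p k)⁻¹ * (z - p i)⁻¹ - (z - p l)⁻¹ * (z - p i)⁻¹)) c ε := by
    apply ContinuousOn.circleIntegrable hε.le
    apply continuousOn_finset_sum
    intro i _
    exact continuousOn_const.mul (((contOn_inv (hoff k)).mul (contOn_inv (hoff i))).sub
      ((contOn_inv (hoff l)).mul (contOn_inv (hoff i))))
  have hW : CircleIntegrable
      (fun z => 2⁻¹ * ((z - p k)⁻¹ * (z - p k)⁻¹) + 2⁻¹ * ((z - p l)⁻¹ * (z - p l)⁻¹)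
        - (z - p k)⁻¹ * (z - p l)⁻¹) c ε := by
    apply ContinuousOn.circleIntegrable hε.le
    exact ((continuousOn_const.mul ((contOn_inv (hoff k)).mul (contOn_inv (hoff k)))).add
      (continuousOn_const.mul ((contOn_inv (hoff l)).mul (contOn_inv (hoff l))))).sub
      ((contOn_inv (hoff k)).mul (contOn_inv (hoff l)))
  have hInt : ∀ i ∈ (Finset.univ : Finset (Fin N)), CircleIntegrable
      (fun z => t i * ((z - p k)⁻¹ * (z - p i)⁻¹ - (z - p l)⁻¹ * (z - p i)⁻¹)) c ε := by
    intro i _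
    exact ContinuousOn.circleIntegrable hε.le (continuousOn_const.mul
      (((contOn_inv (hoff k)).mul (contOn_inv (hoff i))).sub
        ((contOn_inv (hoff l)).mul (contOn_inv (hoff i)))))
  have hSval : (∮ z in C(c, ε),
      ∑ i, t i * ((z - p k)⁻¹ * (z - p i)⁻¹ - (z - p l)⁻¹ * (z - p i)⁻¹))
      = ∑ i, t i * ((∮ z in C(c, ε), (z - p k)⁻¹ * (z - p i)⁻¹)
        - ∮ z in C(c, ε), (z - p l)⁻¹ * (z - p i)⁻¹) := by
    rw [cInt_finset_sum Finset.univ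
      (fun i z => t i * ((z - p k)⁻¹ * (z - p i)⁻¹ - (z - p l)⁻¹ * (z - p i)⁻¹)) c ε hInt]
    refine Finset.sum_congr rfl fun i _ => ?_
    rw [circleIntegral.integral_const_mul]
    congr 1
    exact circleIntegral.integral_sub (cIntegrable_prod hε.le (hoff k) (hoff i))
      (cIntegrable_prod hε.le (hoff l) (hoff i))
  have hWval : (∮ z in C(c, ε), (2⁻¹ * ((z - p k)⁻¹ * (z - p k)⁻¹)
      + 2⁻¹ * ((z - p l)⁻¹ * (z - p l)⁻¹) - (z - p k)⁻¹ * (z - p l)⁻¹))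
      = -(∮ z in C(c, ε), (z - p k)⁻¹ * (z - p l)⁻¹) := by
    have h1 : CircleIntegrable (fun z => 2⁻¹ * ((z - p k)⁻¹ * (z - p k)⁻¹)
        + 2⁻¹ * ((z - p l)⁻¹ * (z - p l)⁻¹)) c ε := by
      apply ContinuousOn.circleIntegrable hε.le
      exact (continuousOn_const.mul ((contOn_inv (hoff k)).mul (contOn_inv (hoff k)))).add
        (continuousOn_const.mul ((contOn_inv (hoff l)).mul (contOn_inv (hoff l))))
    have h2 := cIntegrable_prod hε.le (hoff k) (hoff l)
    rw [circleIntegral.integral_sub h1 h2]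
    have h3 : (∮ z in C(c, ε), (2⁻¹ * ((z - p k)⁻¹ * (z - p k)⁻¹)
        + 2⁻¹ * ((z - p l)⁻¹ * (z - p l)⁻¹))) = 0 := by
      rw [cInt_add (f := fun z => 2⁻¹ * ((z - p k)⁻¹ * (z - p k)⁻¹))
          (g := fun z => 2⁻¹ * ((z - p l)⁻¹ * (z - p l)⁻¹)) (ContinuousOn.circleIntegrable hε.le (continuousOn_const.mul
          ((contOn_inv (hoff k)).mul (contOn_inv (hoff k)))))
        (ContinuousOn.circleIntegrable hε.le (continuousOn_const.mul
          ((contOn_inv (hoff l)).mul (contOn_inv (hoff l))))),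
        circleIntegral.integral_const_mul, circleIntegral.integral_const_mul,
        cInt_inv_sq, cInt_inv_sq]
      ring
    rw [h3]
    ring
  rw [cInt_add hS hW, hSval, hWval]
  ring

lemma colMatrix_det (g h : Fin 2 → ℂ) :
    (colMatrix g h).det = g 0 * h 1 - h 0 * g 1 := by
  simp [Matrix.det_fin_two, colMatrix]

lemma traceSigmaX (g h : Fin 2 → ℂ) (A : Matrix (Fin 2) (Fin 2) ℂ)
    (hd : (colMatrix g h).det ≠ 0) (htr : A.trace = 0) :
    (colMatrix g h).det *
      Matrix.trace (colMatrix g h * (Pplus - Pminus) * (colMatrix g h)⁻¹ * A)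
    = 2 * ((A.mulVec g) 0 * h 1 - (A.mulVec g) 1 * h 0) := by
  have ht : A 1 1 = -A 0 0 := by
    rw [Matrix.trace_fin_two] at htr; linear_combination htr
  rw [Matrix.inv_def, Ring.inverse_eq_inv', colMatrix_det]
  simp only [Matrix.trace_fin_two, Matrix.mul_apply, Matrix.smul_apply, Fin.sum_univ_two,
    Matrix.sub_apply, Matrix.adjugate_fin_two, Matrix.mulVec, dotProduct,
    colMatrix, Pplus, Pminus, Matrix.of_apply, Matrix.cons_val', Matrix.cons_val_zero,
    Matrix.cons_val_one, Matrix.head_cons, Matrix.head_fin_const, Matrix.empty_val',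
    Matrix.cons_val_fin_one, smul_eq_mul, if_true, Fin.one_eq_zero_iff]
  norm_num
  rw [colMatrix_det] at hd
  rw [ht]
  field_simp
  ring

lemma traceSigmaY (g h : Fin 2 → ℂ) (A : Matrix (Fin 2) (Fin 2) ℂ)
    (hd : (colMatrix g h).det ≠ 0) (htr : A.trace = 0) :
    (colMatrix g h).det *
      Matrix.trace (colMatrix g h * (Pplus - Pminus) * (colMatrix g h)⁻¹ * A)
    = -2 * (g 0 * (A.mulVec h) 1 - g 1 * (A.mulVec h) 0) := by
  have ht : A 1 1 = -A 0 0 := by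
    rw [Matrix.trace_fin_two] at htr; linear_combination htr
  rw [Matrix.inv_def, Ring.inverse_eq_inv', colMatrix_det]
  simp only [Matrix.trace_fin_two, Matrix.mul_apply, Matrix.smul_apply, Fin.sum_univ_two,
    Matrix.sub_apply, Matrix.adjugate_fin_two, Matrix.mulVec, dotProduct,
    colMatrix, Pplus, Pminus, Matrix.of_apply, Matrix.cons_val', Matrix.cons_val_zero,
    Matrix.cons_val_one, Matrix.head_cons, Matrix.head_fin_const, Matrix.empty_val',
    Matrix.cons_val_fin_one, smul_eq_mul, if_true, Fin.one_eq_zero_iff]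
  norm_num
  rw [colMatrix_det] at hd
  rw [ht]
  field_simp
  ring

lemma traceSigmaSq (M : Matrix (Fin 2) (Fin 2) ℂ) (hd : IsUnit M.det) :
    Matrix.trace ((M * (Pplus - Pminus) * M⁻¹) * (M * (Pplus - Pminus) * M⁻¹)) = 2 := by
  have h1 : (Pplus - Pminus) * (Pplus - Pminus) = (1 : Matrix (Fin 2) (Fin 2) ℂ) := by
    ext i j
    fin_cases i <;> fin_cases j <;>
      simp [Pplus, Pminus, Matrix.mul_apply, Fin.sum_univ_two, Matrix.one_apply,
        Matrix.sub_apply]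
  have e1 : M⁻¹ * (M * ((Pplus - Pminus) * M⁻¹)) = (Pplus - Pminus) * M⁻¹ := by
    rw [← Matrix.mul_assoc, Matrix.nonsing_inv_mul M hd, Matrix.one_mul]
  have key : (M * (Pplus - Pminus) * M⁻¹) * (M * (Pplus - Pminus) * M⁻¹)
      = (1 : Matrix (Fin 2) (Fin 2) ℂ) := by
    calc (M * (Pplus - Pminus) * M⁻¹) * (M * (Pplus - Pminus) * M⁻¹)
        = M * ((Pplus - Pminus) * (M⁻¹ * (M * ((Pplus - Pminus) * M⁻¹)))) := by
          simp only [Matrix.mul_assoc]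
      _ = M * ((Pplus - Pminus) * ((Pplus - Pminus) * M⁻¹)) := by rw [e1]
      _ = M * (((Pplus - Pminus) * (Pplus - Pminus)) * M⁻¹) := by
          rw [Matrix.mul_assoc]
      _ = M * M⁻¹ := by rw [h1, Matrix.one_mul]
      _ = 1 := Matrix.mul_nonsing_inv M hd
  rw [key, Matrix.trace_one]
  norm_num

lemma sum_mulVec_apply {ι : Type*} (s : Finset ι) (M : ι → Matrix (Fin 2) (Fin 2) ℂ)
    (v : Fin 2 → ℂ) (r : Fin 2) :
    ((∑ i ∈ s, M i).mulVec v) r = ∑ i ∈ s, ((M i).mulVec v) r := by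
  simp only [Matrix.mulVec, dotProduct, Matrix.sum_apply, Finset.sum_mul]
  rw [Finset.sum_comm]

set_option maxHeartbeats 1000000 in
/-- transformation of the τ-function under an elementary Schlesinger
transformation on the Riemann sphere.  With `Φ = F⁻¹dF/dλ` for the multiplier `F`
built from `S_± = G P_± G⁻¹`, the change of the `j`-th Schlesinger Hamiltonian,
expressed as the contour integral
`D_j = (1/(4πi)) ∮_{|λ−λ_j|=ε} (2 tr[Φ A] + tr[Φ²]) dλ`, equals
`∂_{λ_j} log det G` for `j ∉ {k,l}`, and acquires the extra term `∓ 1/(2(λ_k−λ_l))`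
for `j = k` resp. `j = l`. -/
theorem sphere_schlesinger_tau_transformation
    (N : ℕ) (k l : Fin N) (hkl : k ≠ l)
    (U : Set (Fin N → ℂ)) (hU : IsOpen U)
    (hdist : ∀ p ∈ U, ∀ i i' : Fin N, i ≠ i' → p i ≠ p i')
    (A : Fin N → (Fin N → ℂ) → Matrix (Fin 2) (Fin 2) ℂ)
    (hA : ∀ i r c, DifferentiableOn ℂ (fun p => A i p r c) U)
    (hAtr : ∀ i, ∀ p ∈ U, Matrix.trace (A i p) = 0)
    (g h : (Fin N → ℂ) → Fin 2 → ℂ)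
    (hg : DifferentiableOn ℂ g U) (hh : DifferentiableOn ℂ h U)
    (G : (Fin N → ℂ) → Matrix (Fin 2) (Fin 2) ℂ)
    (hGdef : ∀ p, G p = colMatrix (g p) (h p))
    (hGinv : ∀ p ∈ U, (G p).det ≠ 0)
    (hgde1 : ∀ j, j ≠ k → ∀ p ∈ U, HasDerivAt (fun t => g (Function.update p j t))
        (((p j - p k)⁻¹ • A j p).mulVec (g p)) (p j))
    (hgde2 : ∀ p ∈ U, HasDerivAt (fun t => g (Function.update p k t))
        ((-(∑ i ∈ Finset.univ.erase k, (p i - p k)⁻¹ • A i p)).mulVec (g p)) (p k))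
    (hhde1 : ∀ j, j ≠ l → ∀ p ∈ U, HasDerivAt (fun t => h (Function.update p j t))
        (((p j - p l)⁻¹ • A j p).mulVec (h p)) (p j))
    (hhde2 : ∀ p ∈ U, HasDerivAt (fun t => h (Function.update p l t))
        ((-(∑ i ∈ Finset.univ.erase l, (p i - p l)⁻¹ • A i p)).mulVec (h p)) (p l))
    (Sp Sm : (Fin N → ℂ) → Matrix (Fin 2) (Fin 2) ℂ)
    (hSp : ∀ p, Sp p = G p * Pplus * (G p)⁻¹)
    (hSm : ∀ p, Sm p = G p * Pminus * (G p)⁻¹)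
    (Amat : (Fin N → ℂ) → ℂ → Matrix (Fin 2) (Fin 2) ℂ)
    (hAmat : ∀ p z, Amat p z = ∑ i, (z - p i)⁻¹ • A i p)
    (Φ : (Fin N → ℂ) → ℂ → Matrix (Fin 2) (Fin 2) ℂ)
    (hΦ : ∀ p z, Φ p z = (((z - p k)⁻¹ - (z - p l)⁻¹) / 2) • (Sp p - Sm p))
    (D : (Fin N → ℂ) → Fin N → ℝ → ℂ)
    (hD : ∀ p j ε, D p j ε = (1 / (4 * (Real.pi : ℂ) * Complex.I)) *
      (∮ z in C(p j, ε),
        (2 * Matrix.trace (Φ p z * Amat p z) + Matrix.trace (Φ p z * Φ p z))))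
    (p : Fin N → ℂ) (hp : p ∈ U) :
    (∀ j, j ≠ k → j ≠ l → ∀ ε : ℝ, 0 < ε →
      (∀ i, i ≠ j → ε < ‖p i - p j‖) →
      D p j ε = deriv (fun t => (G (Function.update p j t)).det) (p j) / (G p).det) ∧
    (∀ ε : ℝ, 0 < ε → (∀ i, i ≠ k → ε < ‖p i - p k‖) →
      D p k ε = deriv (fun t => (G (Function.update p k t)).det) (p k) / (G p).det
        - 1 / (2 * (p k - p l))) ∧
    (∀ ε : ℝ, 0 < ε → (∀ i, i ≠ l → ε < ‖p i - p l‖) →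
      D p l ε = deriv (fun t => (G (Function.update p l t)).det) (p l) / (G p).det
        + 1 / (2 * (p k - p l)))  := by
  have hd : (G p).det ≠ 0 := hGinv p hp
  have hcd : (colMatrix (g p) (h p)).det ≠ 0 := by rw [← hGdef p]; exact hd
  have hπ : (Real.pi : ℂ) ≠ 0 := by exact_mod_cast Real.pi_ne_zero
  have hI0 : Complex.I ≠ 0 := Complex.I_ne_zero
  have hSeq : Sp p - Sm p
      = colMatrix (g p) (h p) * (Pplus - Pminus) * (colMatrix (g p) (h p))⁻¹ := by
    rw [hSp p, hSm p, hGdef p, Matrix.mul_sub, Matrix.sub_mul]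
  have htX : ∀ i : Fin N, (colMatrix (g p) (h p)).det * Matrix.trace ((Sp p - Sm p) * A i p)
      = 2 * (((A i p).mulVec (g p)) 0 * h p 1 - ((A i p).mulVec (g p)) 1 * h p 0) :=
    fun i => by rw [hSeq]; exact traceSigmaX (g p) (h p) (A i p) hcd (hAtr i p hp)
  have htY : ∀ i : Fin N, (colMatrix (g p) (h p)).det * Matrix.trace ((Sp p - Sm p) * A i p)
      = -2 * (g p 0 * ((A i p).mulVec (h p)) 1 - g p 1 * ((A i p).mulVec (h p)) 0) :=
    fun i => by rw [hSeq]; exact traceSigmaY (g p) (h p) (A i p) hcd (hAtr i p hp)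
  have hS2x : Matrix.trace ((Sp p - Sm p) * (Sp p - Sm p)) = 2 := by
    rw [hSeq]; exact traceSigmaSq _ (isUnit_iff_ne_zero.mpr hcd)
  have hI : ∀ z : ℂ, 2 * Matrix.trace (Φ p z * Amat p z) + Matrix.trace (Φ p z * Φ p z)
      = (∑ i, Matrix.trace ((Sp p - Sm p) * A i p)
          * ((z - p k)⁻¹ * (z - p i)⁻¹ - (z - p l)⁻¹ * (z - p i)⁻¹))
        + (2⁻¹ * ((z - p k)⁻¹ * (z - p k)⁻¹) + 2⁻¹ * ((z - p l)⁻¹ * (z - p l)⁻¹)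
            - (z - p k)⁻¹ * (z - p l)⁻¹) := by
    intro z
    have h1 : Matrix.trace ((Sp p - Sm p) * Amat p z)
        = ∑ i, (z - p i)⁻¹ * Matrix.trace ((Sp p - Sm p) * A i p) := by
      rw [hAmat p z, Finset.mul_sum]
      simp only [mul_smul_comm, Matrix.trace_sum, Matrix.trace_smul, smul_eq_mul]
    have h2 : Matrix.trace (Φ p z * Amat p z)
        = (((z - p k)⁻¹ - (z - p l)⁻¹) / 2) * ∑ i, (z - p i)⁻¹
            * Matrix.trace ((Sp p - Sm p) * A i p) := by
      rw [hΦ p z, smul_mul_assoc, Matrix.trace_smul, smul_eq_mul, h1]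
    have h3 : Matrix.trace (Φ p z * Φ p z)
        = (((z - p k)⁻¹ - (z - p l)⁻¹) / 2) * ((((z - p k)⁻¹ - (z - p l)⁻¹) / 2) * 2) := by
      rw [hΦ p z, smul_mul_assoc, mul_smul_comm, Matrix.trace_smul, Matrix.trace_smul,
        smul_eq_mul, smul_eq_mul, hS2x]
    have h4 : ((z - p k)⁻¹ - (z - p l)⁻¹) * (∑ i, (z - p i)⁻¹
          * Matrix.trace ((Sp p - Sm p) * A i p))
        = ∑ i, Matrix.trace ((Sp p - Sm p) * A i p)
            * ((z - p k)⁻¹ * (z - p i)⁻¹ - (z - p l)⁻¹ * (z - p i)⁻¹) := by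
      rw [Finset.mul_sum]
      exact Finset.sum_congr rfl fun i _ => by ring
    rw [h2, h3, ← h4]
    ring
  refine ⟨?_, ?_, ?_⟩
  · -- case j ∉ {k, l}
    intro j hjk hjl ε hε hsep
    have hoff : ∀ i, ‖p i - p j‖ ≠ ε := by
      intro i
      by_cases hij : i = j
      · subst hij; simpa using hε.ne
      · exact (hsep i hij).ne'
    have hin : ‖p j - p j‖ < ε := by simpa using hε
    have hIval : (∮ z in C(p j, ε),
        (2 * Matrix.trace (Φ p z * Amat p z) + Matrix.trace (Φ p z * Φ p z)))
        = (∑ i, Matrix.trace ((Sp p - Sm p) * A i p)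
            * ((∮ z in C(p j, ε), (z - p k)⁻¹ * (z - p i)⁻¹)
              - ∮ z in C(p j, ε), (z - p l)⁻¹ * (z - p i)⁻¹))
          - ∮ z in C(p j, ε), (z - p k)⁻¹ * (z - p l)⁻¹ := by
      have hT := cInt_total p k l (fun i => Matrix.trace ((Sp p - Sm p) * A i p)) (p j) ε hε hoff
      rw [← hT]
      exact circleIntegral.integral_congr hε.le fun z _ => hI z
    have hVk : (∮ z in C(p j, ε), (z - p k)⁻¹ * (z - p j)⁻¹)
        = (p k - p j)⁻¹ * (0 - 2 * Real.pi * Complex.I) := by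
      rw [cInt_prod hε.le (hdist p hp k j (Ne.symm hjk)) (hoff k) (hoff j),
        cInt_inv_out hε.le (hsep k (Ne.symm hjk)), cInt_inv_in hin]
    have hVl : (∮ z in C(p j, ε), (z - p l)⁻¹ * (z - p j)⁻¹)
        = (p l - p j)⁻¹ * (0 - 2 * Real.pi * Complex.I) := by
      rw [cInt_prod hε.le (hdist p hp l j (Ne.symm hjl)) (hoff l) (hoff j),
        cInt_inv_out hε.le (hsep l (Ne.symm hjl)), cInt_inv_in hin]
    have hV1 : ∀ i, i ≠ j → (∮ z in C(p j, ε), (z - p k)⁻¹ * (z - p i)⁻¹) = 0 := by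
      intro i hij
      by_cases hik : i = k
      · subst hik; exact cInt_inv_sq _ _ _
      · rw [cInt_prod hε.le (hdist p hp k i (Ne.symm hik)) (hoff k) (hoff i),
          cInt_inv_out hε.le (hsep k (Ne.symm hjk)), cInt_inv_out hε.le (hsep i hij)]
        ring
    have hV2 : ∀ i, i ≠ j → (∮ z in C(p j, ε), (z - p l)⁻¹ * (z - p i)⁻¹) = 0 := by
      intro i hij
      by_cases hil : i = l
      · subst hil; exact cInt_inv_sq _ _ _
      · rw [cInt_prod hε.le (hdist p hp l i (Ne.symm hil)) (hoff l) (hoff i),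
          cInt_inv_out hε.le (hsep l (Ne.symm hjl)), cInt_inv_out hε.le (hsep i hij)]
        ring
    have hVkl : (∮ z in C(p j, ε), (z - p k)⁻¹ * (z - p l)⁻¹) = 0 := by
      rw [cInt_prod hε.le (hdist p hp k l hkl) (hoff k) (hoff l),
        cInt_inv_out hε.le (hsep k (Ne.symm hjk)), cInt_inv_out hε.le (hsep l (Ne.symm hjl))]
      ring
    have hsum : (∑ i, Matrix.trace ((Sp p - Sm p) * A i p)
        * ((∮ z in C(p j, ε), (z - p k)⁻¹ * (z - p i)⁻¹)
          - ∮ z in C(p j, ε), (z - p l)⁻¹ * (z - p i)⁻¹))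
        = Matrix.trace ((Sp p - Sm p) * A j p)
          * ((p k - p j)⁻¹ * (0 - 2 * Real.pi * Complex.I)
            - (p l - p j)⁻¹ * (0 - 2 * Real.pi * Complex.I)) := by
      rw [Finset.sum_eq_single_of_mem j (Finset.mem_univ j)
        (fun i _ hij => by rw [hV1 i hij, hV2 i hij]; ring), hVk, hVl]
    have hjk' : p j - p k ≠ 0 := sub_ne_zero.mpr (hdist p hp j k hjk)
    have hjl' : p j - p l ≠ 0 := sub_ne_zero.mpr (hdist p hp j l hjl)
    have hDval : D p j ε = ((p j - p k)⁻¹ - (p j - p l)⁻¹)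
        * Matrix.trace ((Sp p - Sm p) * A j p) / 2 := by
      rw [hD p j ε, hIval, hsum, hVkl,
        show p k - p j = -(p j - p k) by ring, show p l - p j = -(p j - p l) by ring,
        inv_neg, inv_neg]
      field_simp
      ring
    have hg' := hasDerivAt_pi.1 (hgde1 j hjk p hp)
    have hh' := hasDerivAt_pi.1 (hhde1 j hjl p hp)
    have e : (fun t => (G (Function.update p j t)).det)
        = fun t => g (Function.update p j t) 0 * h (Function.update p j t) 1
          - h (Function.update p j t) 0 * g (Function.update p j t) 1 := by
      funext t; rw [hGdef, colMatrix_det]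
    have hder : HasDerivAt (fun t => (G (Function.update p j t)).det)
        ((((p j - p k)⁻¹ • A j p).mulVec (g p)) 0 * h p 1
          + g p 0 * (((p j - p l)⁻¹ • A j p).mulVec (h p)) 1
          - ((((p j - p l)⁻¹ • A j p).mulVec (h p)) 0 * g p 1
            + h p 0 * (((p j - p k)⁻¹ • A j p).mulVec (g p)) 1)) (p j) := by
      rw [e]
      have H := ((hg' 0).mul (hh' 1)).sub ((hh' 0).mul (hg' 1))
      simpa [Function.update_eq_self, Pi.mul_def, Pi.sub_def] using H
    rw [hDval, hder.deriv, hGdef p]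
    simp only [Matrix.smul_mulVec, Pi.smul_apply, smul_eq_mul]
    rw [eq_div_iff hcd]
    linear_combination ((p j - p k)⁻¹ / 2) * htX j - ((p j - p l)⁻¹ / 2) * htY j
  · -- case j = k
    intro ε hε hsep
    have hoff : ∀ i, ‖p i - p k‖ ≠ ε := by
      intro i
      by_cases hik : i = k
      · subst hik; simpa using hε.ne
      · exact (hsep i hik).ne'
    have hin : ‖p k - p k‖ < ε := by simpa using hε
    have hIval : (∮ z in C(p k, ε),
        (2 * Matrix.trace (Φ p z * Amat p z) + Matrix.trace (Φ p z * Φ p z)))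
        = (∑ i, Matrix.trace ((Sp p - Sm p) * A i p)
            * ((∮ z in C(p k, ε), (z - p k)⁻¹ * (z - p i)⁻¹)
              - ∮ z in C(p k, ε), (z - p l)⁻¹ * (z - p i)⁻¹))
          - ∮ z in C(p k, ε), (z - p k)⁻¹ * (z - p l)⁻¹ := by
      have hT := cInt_total p k l (fun i => Matrix.trace ((Sp p - Sm p) * A i p)) (p k) ε hε hoff
      rw [← hT]
      exact circleIntegral.integral_congr hε.le fun z _ => hI z
    have hV1 : ∀ i, i ≠ k → (∮ z in C(p k, ε), (z - p k)⁻¹ * (z - p i)⁻¹)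
        = (p k - p i)⁻¹ * (2 * Real.pi * Complex.I - 0) := by
      intro i hik
      rw [cInt_prod hε.le (hdist p hp k i (Ne.symm hik)) (hoff k) (hoff i),
        cInt_inv_in hin, cInt_inv_out hε.le (hsep i hik)]
    have hV1k : (∮ z in C(p k, ε), (z - p k)⁻¹ * (z - p k)⁻¹) = 0 := cInt_inv_sq _ _ _
    have hV2 : ∀ i, i ≠ k → (∮ z in C(p k, ε), (z - p l)⁻¹ * (z - p i)⁻¹) = 0 := by
      intro i hik
      by_cases hil : i = l
      · subst hil; exact cInt_inv_sq _ _ _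
      · rw [cInt_prod hε.le (hdist p hp l i (Ne.symm hil)) (hoff l) (hoff i),
          cInt_inv_out hε.le (hsep l (Ne.symm hkl)), cInt_inv_out hε.le (hsep i hik)]
        ring
    have hV2k : (∮ z in C(p k, ε), (z - p l)⁻¹ * (z - p k)⁻¹)
        = (p l - p k)⁻¹ * (0 - 2 * Real.pi * Complex.I) := by
      rw [cInt_prod hε.le (hdist p hp l k (Ne.symm hkl)) (hoff l) (hoff k),
        cInt_inv_out hε.le (hsep l (Ne.symm hkl)), cInt_inv_in hin]
    have hVkl : (∮ z in C(p k, ε), (z - p k)⁻¹ * (z - p l)⁻¹)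
        = (p k - p l)⁻¹ * (2 * Real.pi * Complex.I - 0) := by
      rw [cInt_prod hε.le (hdist p hp k l hkl) (hoff k) (hoff l),
        cInt_inv_in hin, cInt_inv_out hε.le (hsep l (Ne.symm hkl))]
    have hsum : (∑ i, Matrix.trace ((Sp p - Sm p) * A i p)
        * ((∮ z in C(p k, ε), (z - p k)⁻¹ * (z - p i)⁻¹)
          - ∮ z in C(p k, ε), (z - p l)⁻¹ * (z - p i)⁻¹))
        = 2 * Real.pi * Complex.I * (∑ i ∈ Finset.univ.erase k,
            (p k - p i)⁻¹ * Matrix.trace ((Sp p - Sm p) * A i p))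
          + Matrix.trace ((Sp p - Sm p) * A k p)
            * (0 - (p l - p k)⁻¹ * (0 - 2 * Real.pi * Complex.I)) := by
      rw [← Finset.sum_erase_add Finset.univ _ (Finset.mem_univ k)]
      congr 1
      · rw [Finset.mul_sum]
        refine Finset.sum_congr rfl fun i hi => ?_
        rw [hV1 i (Finset.ne_of_mem_erase hi), hV2 i (Finset.ne_of_mem_erase hi)]
        ring
      · rw [hV1k, hV2k]
    have hc : p k - p l ≠ 0 := sub_ne_zero.mpr (hdist p hp k l hkl)
    have hDval : D p k ε = (∑ i ∈ Finset.univ.erase k,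
          (p k - p i)⁻¹ * Matrix.trace ((Sp p - Sm p) * A i p)) / 2
        - (p k - p l)⁻¹ * Matrix.trace ((Sp p - Sm p) * A k p) / 2
        - (p k - p l)⁻¹ / 2 := by
      rw [hD p k ε, hIval, hsum, hVkl,
        show p l - p k = -(p k - p l) by ring, inv_neg]
      field_simp
      ring
    have hg' := hasDerivAt_pi.1 (hgde2 p hp)
    have hh' := hasDerivAt_pi.1 (hhde1 k hkl p hp)
    have e : (fun t => (G (Function.update p k t)).det)
        = fun t => g (Function.update p k t) 0 * h (Function.update p k t) 1
          - h (Function.update p k t) 0 * g (Function.update p k t) 1 := by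
      funext t; rw [hGdef, colMatrix_det]
    have hder : HasDerivAt (fun t => (G (Function.update p k t)).det)
        ((((-(∑ i ∈ Finset.univ.erase k, (p i - p k)⁻¹ • A i p)).mulVec (g p)) 0) * h p 1
          + g p 0 * (((p k - p l)⁻¹ • A k p).mulVec (h p)) 1
          - ((((p k - p l)⁻¹ • A k p).mulVec (h p)) 0 * g p 1
            + h p 0 * (((-(∑ i ∈ Finset.univ.erase k, (p i - p k)⁻¹ • A i p)).mulVec (g p)) 1)))
        (p k) := by
      rw [e]
      have H := ((hg' 0).mul (hh' 1)).sub ((hh' 0).mul (hg' 1))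
      simpa [Function.update_eq_self, Pi.mul_def, Pi.sub_def] using H
    have exp' : ∀ r, ((-(∑ i ∈ Finset.univ.erase k, (p i - p k)⁻¹ • A i p)).mulVec (g p)) r
        = -∑ i ∈ Finset.univ.erase k, (p i - p k)⁻¹ * ((A i p).mulVec (g p)) r := by
      intro r
      rw [Matrix.neg_mulVec, Pi.neg_apply, sum_mulVec_apply]
      congr 1
      exact Finset.sum_congr rfl fun i _ => by
        rw [Matrix.smul_mulVec, Pi.smul_apply, smul_eq_mul]
    have hsum3 : ∑ i ∈ Finset.univ.erase k, (p i - p k)⁻¹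
          * (((A i p).mulVec (g p)) 0 * h p 1 - h p 0 * ((A i p).mulVec (g p)) 1)
        = -((colMatrix (g p) (h p)).det / 2 * ∑ i ∈ Finset.univ.erase k,
            (p k - p i)⁻¹ * Matrix.trace ((Sp p - Sm p) * A i p)) := by
      rw [Finset.mul_sum, ← Finset.sum_neg_distrib]
      refine Finset.sum_congr rfl fun i _ => ?_
      rw [show p i - p k = -(p k - p i) by ring, inv_neg]
      linear_combination ((p k - p i)⁻¹ / 2) * htX i
    have comb : (∑ i ∈ Finset.univ.erase k, (p i - p k)⁻¹ * ((A i p).mulVec (g p)) 0) * h p 1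
          - h p 0 * (∑ i ∈ Finset.univ.erase k, (p i - p k)⁻¹ * ((A i p).mulVec (g p)) 1)
        = ∑ i ∈ Finset.univ.erase k, (p i - p k)⁻¹
            * (((A i p).mulVec (g p)) 0 * h p 1 - h p 0 * ((A i p).mulVec (g p)) 1) := by
      rw [Finset.sum_mul, Finset.mul_sum, ← Finset.sum_sub_distrib]
      exact Finset.sum_congr rfl fun i _ => by ring
    rw [hDval, hder.deriv, hGdef p, exp' 0, exp' 1]
    simp only [Matrix.smul_mulVec, Pi.smul_apply, smul_eq_mul]
    rw [show (1 : ℂ) / (2 * (p k - p l)) = (p k - p l)⁻¹ / 2 by rw [one_div, mul_inv]; ring]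
    rw [eq_sub_iff_add_eq, eq_div_iff hcd]
    linear_combination comb + hsum3 - ((p k - p l)⁻¹ / 2) * htY k
  · -- case j = l
    intro ε hε hsep
    have hoff : ∀ i, ‖p i - p l‖ ≠ ε := by
      intro i
      by_cases hil : i = l
      · subst hil; simpa using hε.ne
      · exact (hsep i hil).ne'
    have hin : ‖p l - p l‖ < ε := by simpa using hε
    have hIval : (∮ z in C(p l, ε),
        (2 * Matrix.trace (Φ p z * Amat p z) + Matrix.trace (Φ p z * Φ p z)))
        = (∑ i, Matrix.trace ((Sp p - Sm p) * A i p)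
            * ((∮ z in C(p l, ε), (z - p k)⁻¹ * (z - p i)⁻¹)
              - ∮ z in C(p l, ε), (z - p l)⁻¹ * (z - p i)⁻¹))
          - ∮ z in C(p l, ε), (z - p k)⁻¹ * (z - p l)⁻¹ := by
      have hT := cInt_total p k l (fun i => Matrix.trace ((Sp p - Sm p) * A i p)) (p l) ε hε hoff
      rw [← hT]
      exact circleIntegral.integral_congr hε.le fun z _ => hI z
    have hV1 : ∀ i, i ≠ l → (∮ z in C(p l, ε), (z - p k)⁻¹ * (z - p i)⁻¹) = 0 := by
      intro i hil
      by_cases hik : i = k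
      · subst hik; exact cInt_inv_sq _ _ _
      · rw [cInt_prod hε.le (hdist p hp k i (Ne.symm hik)) (hoff k) (hoff i),
          cInt_inv_out hε.le (hsep k hkl), cInt_inv_out hε.le (hsep i hil)]
        ring
    have hV1l : (∮ z in C(p l, ε), (z - p k)⁻¹ * (z - p l)⁻¹)
        = (p k - p l)⁻¹ * (0 - 2 * Real.pi * Complex.I) := by
      rw [cInt_prod hε.le (hdist p hp k l hkl) (hoff k) (hoff l),
        cInt_inv_out hε.le (hsep k hkl), cInt_inv_in hin]
    have hV2 : ∀ i, i ≠ l → (∮ z in C(p l, ε), (z - p l)⁻¹ * (z - p i)⁻¹)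
        = (p l - p i)⁻¹ * (2 * Real.pi * Complex.I - 0) := by
      intro i hil
      rw [cInt_prod hε.le (hdist p hp l i (Ne.symm hil)) (hoff l) (hoff i),
        cInt_inv_in hin, cInt_inv_out hε.le (hsep i hil)]
    have hV2l : (∮ z in C(p l, ε), (z - p l)⁻¹ * (z - p l)⁻¹) = 0 := cInt_inv_sq _ _ _
    have hsum : (∑ i, Matrix.trace ((Sp p - Sm p) * A i p)
        * ((∮ z in C(p l, ε), (z - p k)⁻¹ * (z - p i)⁻¹)
          - ∮ z in C(p l, ε), (z - p l)⁻¹ * (z - p i)⁻¹))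
        = -(2 * Real.pi * Complex.I) * (∑ i ∈ Finset.univ.erase l,
            (p l - p i)⁻¹ * Matrix.trace ((Sp p - Sm p) * A i p))
          + Matrix.trace ((Sp p - Sm p) * A l p)
            * ((p k - p l)⁻¹ * (0 - 2 * Real.pi * Complex.I) - 0) := by
      rw [← Finset.sum_erase_add Finset.univ _ (Finset.mem_univ l)]
      congr 1
      · rw [Finset.mul_sum]
        refine Finset.sum_congr rfl fun i hi => ?_
        rw [hV1 i (Finset.ne_of_mem_erase hi), hV2 i (Finset.ne_of_mem_erase hi)]
        ring
      · rw [hV1l, hV2l]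
    have hc : p k - p l ≠ 0 := sub_ne_zero.mpr (hdist p hp k l hkl)
    have hDval : D p l ε = -(∑ i ∈ Finset.univ.erase l,
          (p l - p i)⁻¹ * Matrix.trace ((Sp p - Sm p) * A i p)) / 2
        - (p k - p l)⁻¹ * Matrix.trace ((Sp p - Sm p) * A l p) / 2
        + (p k - p l)⁻¹ / 2 := by
      rw [hD p l ε, hIval, hsum, hV1l]
      field_simp
      ring
    have hg' := hasDerivAt_pi.1 (hgde1 l (Ne.symm hkl) p hp)
    have hh' := hasDerivAt_pi.1 (hhde2 p hp)
    have e : (fun t => (G (Function.update p l t)).det)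
        = fun t => g (Function.update p l t) 0 * h (Function.update p l t) 1
          - h (Function.update p l t) 0 * g (Function.update p l t) 1 := by
      funext t; rw [hGdef, colMatrix_det]
    have hder : HasDerivAt (fun t => (G (Function.update p l t)).det)
        ((((p l - p k)⁻¹ • A l p).mulVec (g p)) 0 * h p 1
          + g p 0 * (((-(∑ i ∈ Finset.univ.erase l, (p i - p l)⁻¹ • A i p)).mulVec (h p)) 1)
          - ((((-(∑ i ∈ Finset.univ.erase l, (p i - p l)⁻¹ • A i p)).mulVec (h p)) 0) * g p 1
            + h p 0 * (((p l - p k)⁻¹ • A l p).mulVec (g p)) 1)) (p l) := by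
      rw [e]
      have H := ((hg' 0).mul (hh' 1)).sub ((hh' 0).mul (hg' 1))
      simpa [Function.update_eq_self, Pi.mul_def, Pi.sub_def] using H
    have exp' : ∀ r, ((-(∑ i ∈ Finset.univ.erase l, (p i - p l)⁻¹ • A i p)).mulVec (h p)) r
        = -∑ i ∈ Finset.univ.erase l, (p i - p l)⁻¹ * ((A i p).mulVec (h p)) r := by
      intro r
      rw [Matrix.neg_mulVec, Pi.neg_apply, sum_mulVec_apply]
      congr 1
      exact Finset.sum_congr rfl fun i _ => by
        rw [Matrix.smul_mulVec, Pi.smul_apply, smul_eq_mul]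
    have hsum3 : ∑ i ∈ Finset.univ.erase l, (p i - p l)⁻¹
          * (g p 0 * ((A i p).mulVec (h p)) 1 - ((A i p).mulVec (h p)) 0 * g p 1)
        = (colMatrix (g p) (h p)).det / 2 * ∑ i ∈ Finset.univ.erase l,
            (p l - p i)⁻¹ * Matrix.trace ((Sp p - Sm p) * A i p) := by
      rw [Finset.mul_sum]
      refine Finset.sum_congr rfl fun i _ => ?_
      rw [show p i - p l = -(p l - p i) by ring, inv_neg]
      linear_combination (-(p l - p i)⁻¹ / 2) * htY i
    have comb : g p 0 * (∑ i ∈ Finset.univ.erase l, (p i - p l)⁻¹ * ((A i p).mulVec (h p)) 1)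
          - (∑ i ∈ Finset.univ.erase l, (p i - p l)⁻¹ * ((A i p).mulVec (h p)) 0) * g p 1
        = ∑ i ∈ Finset.univ.erase l, (p i - p l)⁻¹
            * (g p 0 * ((A i p).mulVec (h p)) 1 - ((A i p).mulVec (h p)) 0 * g p 1) := by
      rw [Finset.mul_sum, Finset.sum_mul, ← Finset.sum_sub_distrib]
      exact Finset.sum_congr rfl fun i _ => by ring
    rw [hDval, hder.deriv, hGdef p, exp' 0, exp' 1]
    simp only [Matrix.smul_mulVec, Pi.smul_apply, smul_eq_mul]
    rw [show p l - p k = -(p k - p l) by ring, inv_neg]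
    rw [show (1 : ℂ) / (2 * (p k - p l)) = (p k - p l)⁻¹ / 2 by rw [one_div, mul_inv]; ring]
    rw [← sub_eq_iff_eq_add, eq_div_iff hcd]
    linear_combination comb + hsum3 - ((p k - p l)⁻¹ / 2) * htX l
end

section
/- For every λ ∈ ℂ with λ ∉ L and λ+1, λ+μ ∉ L, the functions 𝒵₁, 𝒵₂, 𝒵₃ satisfy: 𝒵₁(λ+1) = −𝒵₁(λ) and 𝒵₁(λ+μ) = 𝒵₁(λ) − w₁(λ); 𝒵₂(λ+1) = −𝒵₂(λ) and 𝒵₂(λ+μ) = −𝒵₂(λ) + w₂(λ); 𝒵₃(λ+1) = 𝒵₃(λ) and 𝒵₃(λ+μ) = −𝒵₃(λ) + w₃(λ). -/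
open Complex Matrix

namespace ZPaux
open Complex
noncomputable section

lemma theta3_eq (μ lam : ℂ) : theta3 μ lam = jacobiTheta₂ lam μ :=
  tsum_congr fun m => by rw [jacobiTheta₂_term]; exact congrArg cexp (by ring)

lemma theta4_eq (μ lam : ℂ) : theta4 μ lam = jacobiTheta₂ (lam + 1/2) μ :=
  tsum_congr fun m => by rw [jacobiTheta₂_term]; exact congrArg cexp (by ring)

lemma theta2_eq (μ lam : ℂ) :
    theta2 μ lam = cexp ((Real.pi:ℂ) * I * μ / 4 + (Real.pi:ℂ) * I * lam)
      * jacobiTheta₂ (lam + μ/2) μ := by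
  rw [jacobiTheta₂, ← tsum_mul_left]
  exact tsum_congr fun m => by
    rw [jacobiTheta₂_term, ← Complex.exp_add]; exact congrArg cexp (by ring)

lemma theta1_eq (μ lam : ℂ) : theta1 μ lam = -theta2 μ (lam + 1/2) := rfl

lemma exp_pi_I : cexp ((Real.pi:ℂ) * I) = -1 := Complex.exp_pi_mul_I

lemma diff_theta3 (μ : ℂ) (hμ : 0 < μ.im) : Differentiable ℂ (theta3 μ) := by
  have : theta3 μ = fun lam => jacobiTheta₂ lam μ := funext fun lam => theta3_eq μ lam
  rw [this]
  exact fun z => (hasDerivAt_jacobiTheta₂_fst z hμ).differentiableAt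

lemma diff_theta4 (μ : ℂ) (hμ : 0 < μ.im) : Differentiable ℂ (theta4 μ) := by
  have : theta4 μ = fun lam => jacobiTheta₂ (lam + 1/2) μ := funext fun lam => theta4_eq μ lam
  rw [this]
  exact fun z => (((hasDerivAt_jacobiTheta₂_fst (z + 1/2) hμ).comp z
    ((hasDerivAt_id z).add_const (1/2 : ℂ))).differentiableAt :
      DifferentiableAt ℂ ((jacobiTheta₂ · μ) ∘ fun x => id x + 1/2) z)

lemma diff_theta2 (μ : ℂ) (hμ : 0 < μ.im) : Differentiable ℂ (theta2 μ) := by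
  have : theta2 μ = fun lam => cexp ((Real.pi:ℂ) * I * μ / 4 + (Real.pi:ℂ) * I * lam)
      * jacobiTheta₂ (lam + μ/2) μ := funext fun lam => theta2_eq μ lam
  rw [this]
  refine Differentiable.mul ?_ ?_
  · exact ((differentiable_const _).add (differentiable_id.const_mul _)).cexp
  · exact fun z => (((hasDerivAt_jacobiTheta₂_fst (z + μ/2) hμ).comp z
      ((hasDerivAt_id z).add_const (μ/2))).differentiableAt :
        DifferentiableAt ℂ ((jacobiTheta₂ · μ) ∘ fun x => id x + μ/2) z)

-- translation by 1
lemma t3_add1 (μ lam : ℂ) : theta3 μ (lam + 1) = theta3 μ lam := by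
  rw [theta3_eq, theta3_eq, jacobiTheta₂_add_left]

lemma t4_add1 (μ lam : ℂ) : theta4 μ (lam + 1) = theta4 μ lam := by
  rw [theta4_eq, theta4_eq, show lam + 1 + 1/2 = (lam + 1/2) + 1 by ring,
    jacobiTheta₂_add_left]

lemma t2_add1 (μ lam : ℂ) : theta2 μ (lam + 1) = -theta2 μ lam := by
  rw [theta2_eq, theta2_eq, show lam + 1 + μ/2 = (lam + μ/2) + 1 by ring,
    jacobiTheta₂_add_left,
    show (Real.pi:ℂ) * I * μ / 4 + (Real.pi:ℂ) * I * (lam + 1)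
      = ((Real.pi:ℂ) * I * μ / 4 + (Real.pi:ℂ) * I * lam) + (Real.pi:ℂ) * I by ring,
    Complex.exp_add, exp_pi_I]
  ring

lemma t1_add1 (μ lam : ℂ) : theta1 μ (lam + 1) = -theta1 μ lam := by
  rw [theta1_eq, theta1_eq, show lam + 1 + 1/2 = (lam + 1/2) + 1 by ring, t2_add1]

-- translation by μ ; factor c = exp(-πiμ - 2πiλ)
lemma t3_addmu (μ lam : ℂ) : theta3 μ (lam + μ)
    = cexp (-(Real.pi:ℂ) * I * μ - 2 * (Real.pi:ℂ) * I * lam) * theta3 μ lam := by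
  rw [theta3_eq, theta3_eq, jacobiTheta₂_add_left']
  exact congrArg (· * _) (congrArg cexp (by ring))

lemma t4_addmu (μ lam : ℂ) : theta4 μ (lam + μ)
    = -(cexp (-(Real.pi:ℂ) * I * μ - 2 * (Real.pi:ℂ) * I * lam) * theta4 μ lam) := by
  rw [theta4_eq, theta4_eq, show lam + μ + 1/2 = (lam + 1/2) + μ by ring,
    jacobiTheta₂_add_left',
    show -(Real.pi:ℂ) * I * (μ + 2 * (lam + 1/2))
      = (-(Real.pi:ℂ) * I * μ - 2 * (Real.pi:ℂ) * I * lam) + -((Real.pi:ℂ) * I) by ring,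
    Complex.exp_add, Complex.exp_neg, exp_pi_I]
  ring

lemma t2_addmu (μ lam : ℂ) : theta2 μ (lam + μ)
    = cexp (-(Real.pi:ℂ) * I * μ - 2 * (Real.pi:ℂ) * I * lam) * theta2 μ lam := by
  rw [theta2_eq, theta2_eq, show lam + μ + μ/2 = (lam + μ/2) + μ by ring,
    jacobiTheta₂_add_left', ← mul_assoc, ← Complex.exp_add, ← mul_assoc, ← Complex.exp_add]
  exact congrArg (· * _) (congrArg cexp (by ring))

lemma t1_addmu (μ lam : ℂ) : theta1 μ (lam + μ)
    = -(cexp (-(Real.pi:ℂ) * I * μ - 2 * (Real.pi:ℂ) * I * lam) * theta1 μ lam) := by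
  rw [theta1_eq, theta1_eq, show lam + μ + 1/2 = (lam + 1/2) + μ by ring, t2_addmu,
    show -(Real.pi:ℂ) * I * μ - 2 * (Real.pi:ℂ) * I * (lam + 1/2)
      = (-(Real.pi:ℂ) * I * μ - 2 * (Real.pi:ℂ) * I * lam) + -((Real.pi:ℂ) * I) by ring,
    Complex.exp_add, Complex.exp_neg, exp_pi_I]
  ring

-- generic: f(z+1) = s f(z)  ⇒  deriv f (λ+1) = s deriv f λ
lemma deriv_shift1 {f : ℂ → ℂ} {s : ℂ} (hF : ∀ z, f (z + 1) = s * f z) (lam : ℂ) :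
    deriv f (lam + 1) = s * deriv f lam := by
  have h : (fun z => f (z + 1)) = fun z => s * f z := funext fun z => hF z
  rw [← deriv_comp_add_const, h, deriv_const_mul_field]

-- generic: f(z+μ) = s exp(-πiμ-2πiz) f(z), f differentiable ⇒ deriv relation
lemma deriv_shiftmu {f : ℂ → ℂ} {s μ : ℂ} (hf : Differentiable ℂ f)
    (hF : ∀ z, f (z + μ) = s * cexp (-(Real.pi:ℂ) * I * μ - 2 * (Real.pi:ℂ) * I * z) * f z)
    (lam : ℂ) :
    deriv f (lam + μ) = s * cexp (-(Real.pi:ℂ) * I * μ - 2 * (Real.pi:ℂ) * I * lam) *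
      (deriv f lam - 2 * (Real.pi:ℂ) * I * f lam) := by
  have h : (fun z => f (z + μ))
      = fun z => s * cexp (-(Real.pi:ℂ) * I * μ - 2 * (Real.pi:ℂ) * I * z) * f z :=
    funext fun z => hF z
  have hce : HasDerivAt (fun z : ℂ => s * cexp (-(Real.pi:ℂ) * I * μ - 2 * (Real.pi:ℂ) * I * z))
      (s * (cexp (-(Real.pi:ℂ) * I * μ - 2 * (Real.pi:ℂ) * I * lam)
        * -(2 * (Real.pi:ℂ) * I))) lam := by
    refine HasDerivAt.const_mul s ?_
    have hin : HasDerivAt (fun z : ℂ => -(Real.pi:ℂ) * I * μ - 2 * (Real.pi:ℂ) * I * z)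
        (-(2 * (Real.pi:ℂ) * I)) lam := by
      simpa using ((hasDerivAt_id lam).const_mul (2 * (Real.pi:ℂ) * I)).const_sub
        (-(Real.pi:ℂ) * I * μ)
    exact hin.cexp
  have hp : HasDerivAt (fun z => s * cexp (-(Real.pi:ℂ) * I * μ - 2 * (Real.pi:ℂ) * I * z) * f z)
      _ lam := hce.mul (hf lam).hasDerivAt
  rw [← deriv_comp_add_const, h, hp.deriv]
  ring

-- algebra helper
lemma Z_algebra (W D T p : ℂ) (hp : p ≠ 0) (hW : T = 0 → W = 0) :
    W / p * ((D - p * T) / T) = W / p * (D / T) - W := by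
  rcases eq_or_ne T 0 with h | h
  · simp [h, hW h]
  · field_simp

lemma master (A c D T U p : ℂ) (hc : c ≠ 0) (hp : p ≠ 0) :
    (A * -(c * T) / -(c * U)) / p * ((-1 * c * (D - p * T)) / -(c * T))
      = (A * T / U) / p * (D / T) - A * T / U := by
  rw [show A * -(c * T) = -(c * (A * T)) from by ring,
      show -1 * c * (D - p * T) = -(c * (D - p * T)) from by ring,
      neg_div_neg_eq, neg_div_neg_eq, mul_div_mul_left _ _ hc, mul_div_mul_left _ _ hc]
  exact Z_algebra (A * T / U) D T p hp (fun h => by rw [h, mul_zero, zero_div])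

lemma master2 (A c D T U p : ℂ) (hc : c ≠ 0) (hp : p ≠ 0) :
    (A * (c * T) / -(c * U)) / p * ((1 * c * (D - p * T)) / (c * T))
      = -((A * T / U) / p * (D / T)) + A * T / U := by
  rw [show A * (c * T) = c * (A * T) from by ring,
      show 1 * c * (D - p * T) = c * (D - p * T) from by ring,
      div_neg, mul_div_mul_left _ _ hc, mul_div_mul_left _ _ hc, neg_div, neg_mul,
      Z_algebra (A * T / U) D T p hp (fun h => by rw [h, mul_zero, zero_div])]
  ring

lemma master1a (A D T U p : ℂ) :
    (A * T / -U) / p * ((1 * D) / T) = -((A * T / U) / p * (D / T)) := by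
  rw [div_neg, one_mul]; ring

lemma master1b (A D T U p : ℂ) :
    (A * -T / -U) / p * ((-1 * D) / -T) = (A * T / U) / p * (D / T) := by
  rw [show A * -T = -(A * T) from by ring, neg_div_neg_eq,
      show -1 * D = -D from by ring, neg_div_neg_eq]

end
end ZPaux

/-- periodicity properties of `𝒵₁, 𝒵₂, 𝒵₃` along the two periods. -/
theorem Z_periodicity (μ : ℂ) (hμ : 0 < μ.im) (lam : ℂ)
    (h0 : ¬ inLattice μ lam) (h1 : ¬ inLattice μ (lam + 1)) (h2 : ¬ inLattice μ (lam + μ)) :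
    (Z1 μ (lam + 1) = -Z1 μ lam ∧ Z1 μ (lam + μ) = Z1 μ lam - w1 μ lam) ∧
    (Z2 μ (lam + 1) = -Z2 μ lam ∧ Z2 μ (lam + μ) = -Z2 μ lam + w2 μ lam) ∧
    (Z3 μ (lam + 1) = Z3 μ lam ∧ Z3 μ (lam + μ) = -Z3 μ lam + w3 μ lam) := by
  
  clear h0 h1 h2
  have hc : cexp (-(Real.pi:ℂ) * Complex.I * μ - 2 * (Real.pi:ℂ) * Complex.I * lam) ≠ 0 :=
    Complex.exp_ne_zero _
  have hp : (2 * (Real.pi:ℂ) * Complex.I) ≠ 0 := by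
    simp [Real.pi_ne_zero, Complex.I_ne_zero]
  have ed4_1 : deriv (theta4 μ) (lam + 1) = 1 * deriv (theta4 μ) lam :=
    ZPaux.deriv_shift1 (fun z => by rw [ZPaux.t4_add1, one_mul]) lam
  have ed3_1 : deriv (theta3 μ) (lam + 1) = 1 * deriv (theta3 μ) lam :=
    ZPaux.deriv_shift1 (fun z => by rw [ZPaux.t3_add1, one_mul]) lam
  have ed2_1 : deriv (theta2 μ) (lam + 1) = -1 * deriv (theta2 μ) lam :=
    ZPaux.deriv_shift1 (fun z => by rw [ZPaux.t2_add1]; ring) lam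
  have ed4m : deriv (theta4 μ) (lam + μ)
      = -1 * cexp (-(Real.pi:ℂ) * Complex.I * μ - 2 * (Real.pi:ℂ) * Complex.I * lam)
        * (deriv (theta4 μ) lam - 2 * (Real.pi:ℂ) * Complex.I * theta4 μ lam) :=
    ZPaux.deriv_shiftmu (ZPaux.diff_theta4 μ hμ) (fun z => by rw [ZPaux.t4_addmu]; ring) lam
  have ed3m : deriv (theta3 μ) (lam + μ)
      = 1 * cexp (-(Real.pi:ℂ) * Complex.I * μ - 2 * (Real.pi:ℂ) * Complex.I * lam)
        * (deriv (theta3 μ) lam - 2 * (Real.pi:ℂ) * Complex.I * theta3 μ lam) :=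
    ZPaux.deriv_shiftmu (ZPaux.diff_theta3 μ hμ) (fun z => by rw [ZPaux.t3_addmu, one_mul]) lam
  have ed2m : deriv (theta2 μ) (lam + μ)
      = 1 * cexp (-(Real.pi:ℂ) * Complex.I * μ - 2 * (Real.pi:ℂ) * Complex.I * lam)
        * (deriv (theta2 μ) lam - 2 * (Real.pi:ℂ) * Complex.I * theta2 μ lam) :=
    ZPaux.deriv_shiftmu (ZPaux.diff_theta2 μ hμ) (fun z => by rw [ZPaux.t2_addmu, one_mul]) lam
  refine ⟨⟨?_, ?_⟩, ⟨?_, ?_⟩, ⟨?_, ?_⟩⟩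
  · simp only [Z1, w1]
    rw [ZPaux.t4_add1, ZPaux.t1_add1, ed4_1]
    exact ZPaux.master1a _ _ _ _ _
  · simp only [Z1, w1]
    rw [ZPaux.t4_addmu, ZPaux.t1_addmu, ed4m]
    exact ZPaux.master _ _ _ _ _ _ hc hp
  · simp only [Z2, w2]
    rw [ZPaux.t3_add1, ZPaux.t1_add1, ed3_1]
    exact ZPaux.master1a _ _ _ _ _
  · simp only [Z2, w2]
    rw [ZPaux.t3_addmu, ZPaux.t1_addmu, ed3m]
    exact ZPaux.master2 _ _ _ _ _ _ hc hp
  · simp only [Z3, w3]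
    rw [ZPaux.t2_add1, ZPaux.t1_add1, ed2_1]
    exact ZPaux.master1b _ _ _ _ _
  · simp only [Z3, w3]
    rw [ZPaux.t2_addmu, ZPaux.t1_addmu, ed2m]
    exact ZPaux.master2 _ _ _ _ _ _ hc hp
end

section
/- Let J₁, J₂, J₃ ∈ ℂ, m ∈ ℂ, and define the matrix-valued function f(λ) := ½I + Σ_{a=1}^{3} J_a w_a(λ − m) σ_a. Then for every λ ∈ ℂ with λ − m ∉ L, f(λ+1) = σ₃ f(λ) σ₃ and f(λ+μ) = σ₁ f(λ) σ₁. (Twist properties of the multiplier of the elementary elliptic Schlesinger transformation, which guarantee that the transformed solution has the same constant twists σ₃, σ₁ along the basic cycles of the torus.) -/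
open Complex Matrix

section AuxTwist

open Complex

private lemma tsum_shift_eq {g h : ℤ → ℂ} (c : ℂ) (hgh : ∀ m : ℤ, g m = c * h (m + 1)) :
    ∑' m : ℤ, g m = c * ∑' m : ℤ, h m := by
  rw [← tsum_mul_left, ← (Equiv.addRight (1 : ℤ)).tsum_eq (fun m : ℤ => c * h m)]
  exact tsum_congr fun m => by simpa using hgh m

private lemma theta1_add_one (μ lam : ℂ) : theta1 μ (lam + 1) = - theta1 μ lam := by
  unfold theta1
  rw [neg_neg, neg_eq_iff_eq_neg, ← tsum_neg]
  refine tsum_congr fun m => ?_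
  have h : ((Real.pi : ℂ) * Complex.I * μ * ((m : ℂ) + 1/2)^2
      + 2 * (Real.pi : ℂ) * Complex.I * ((m : ℂ) + 1/2) * (lam + 1 + 1/2))
      = ((Real.pi : ℂ) * Complex.I * μ * ((m : ℂ) + 1/2)^2
      + 2 * (Real.pi : ℂ) * Complex.I * ((m : ℂ) + 1/2) * (lam + 1/2))
      + (m : ℂ) * (2 * (Real.pi : ℂ) * Complex.I) + (Real.pi : ℂ) * Complex.I := by ring
  rw [h, Complex.exp_add, Complex.exp_add, Complex.exp_int_mul_two_pi_mul_I,
    Complex.exp_pi_mul_I]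
  ring

private lemma theta2_add_one (μ lam : ℂ) : theta2 μ (lam + 1) = - theta2 μ lam := by
  unfold theta2
  rw [← tsum_neg]
  refine tsum_congr fun m => ?_
  have h : ((Real.pi : ℂ) * Complex.I * μ * ((m : ℂ) + 1/2)^2
      + 2 * (Real.pi : ℂ) * Complex.I * ((m : ℂ) + 1/2) * (lam + 1))
      = ((Real.pi : ℂ) * Complex.I * μ * ((m : ℂ) + 1/2)^2
      + 2 * (Real.pi : ℂ) * Complex.I * ((m : ℂ) + 1/2) * lam)
      + (m : ℂ) * (2 * (Real.pi : ℂ) * Complex.I) + (Real.pi : ℂ) * Complex.I := by ring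
  rw [h, Complex.exp_add, Complex.exp_add, Complex.exp_int_mul_two_pi_mul_I,
    Complex.exp_pi_mul_I]
  ring

private lemma theta3_add_one (μ lam : ℂ) : theta3 μ (lam + 1) = theta3 μ lam := by
  unfold theta3
  refine tsum_congr fun m => ?_
  have h : ((Real.pi : ℂ) * Complex.I * μ * (m : ℂ)^2
      + 2 * (Real.pi : ℂ) * Complex.I * (m : ℂ) * (lam + 1))
      = ((Real.pi : ℂ) * Complex.I * μ * (m : ℂ)^2
      + 2 * (Real.pi : ℂ) * Complex.I * (m : ℂ) * lam)
      + (m : ℂ) * (2 * (Real.pi : ℂ) * Complex.I) := by ring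
  rw [h, Complex.exp_add, Complex.exp_int_mul_two_pi_mul_I, mul_one]

private lemma theta4_add_one (μ lam : ℂ) : theta4 μ (lam + 1) = theta4 μ lam := by
  unfold theta4
  refine tsum_congr fun m => ?_
  have h : ((Real.pi : ℂ) * Complex.I * μ * (m : ℂ)^2
      + 2 * (Real.pi : ℂ) * Complex.I * (m : ℂ) * (lam + 1 + 1/2))
      = ((Real.pi : ℂ) * Complex.I * μ * (m : ℂ)^2
      + 2 * (Real.pi : ℂ) * Complex.I * (m : ℂ) * (lam + 1/2))
      + (m : ℂ) * (2 * (Real.pi : ℂ) * Complex.I) := by ring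
  rw [h, Complex.exp_add, Complex.exp_int_mul_two_pi_mul_I, mul_one]

private lemma theta1_add_mu (μ lam : ℂ) : theta1 μ (lam + μ) =
    (-Complex.exp (-((Real.pi : ℂ) * Complex.I * μ) - 2 * (Real.pi : ℂ) * Complex.I * lam))
      * theta1 μ lam := by
  unfold theta1
  rw [neg_mul_neg, neg_eq_iff_eq_neg, ← neg_mul]
  refine tsum_shift_eq _ fun m => ?_
  push_cast
  have h : ((Real.pi : ℂ) * Complex.I * μ * ((m : ℂ) + 1/2)^2
      + 2 * (Real.pi : ℂ) * Complex.I * ((m : ℂ) + 1/2) * (lam + μ + 1/2))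
      = (-((Real.pi : ℂ) * Complex.I))
      + ((-((Real.pi : ℂ) * Complex.I * μ) - 2 * (Real.pi : ℂ) * Complex.I * lam)
      + ((Real.pi : ℂ) * Complex.I * μ * (((m : ℂ) + 1) + 1/2)^2
      + 2 * (Real.pi : ℂ) * Complex.I * (((m : ℂ) + 1) + 1/2) * (lam + 1/2))) := by ring
  rw [h, Complex.exp_add, Complex.exp_add, Complex.exp_neg, Complex.exp_pi_mul_I,
    inv_neg_one]
  ring

private lemma theta2_add_mu (μ lam : ℂ) : theta2 μ (lam + μ) =
    Complex.exp (-((Real.pi : ℂ) * Complex.I * μ) - 2 * (Real.pi : ℂ) * Complex.I * lam)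
      * theta2 μ lam := by
  unfold theta2
  refine tsum_shift_eq _ fun m => ?_
  push_cast
  rw [← Complex.exp_add]
  congr 1
  ring

private lemma theta3_add_mu (μ lam : ℂ) : theta3 μ (lam + μ) =
    Complex.exp (-((Real.pi : ℂ) * Complex.I * μ) - 2 * (Real.pi : ℂ) * Complex.I * lam)
      * theta3 μ lam := by
  unfold theta3
  refine tsum_shift_eq _ fun m => ?_
  push_cast
  rw [← Complex.exp_add]
  congr 1
  ring

private lemma theta4_add_mu (μ lam : ℂ) : theta4 μ (lam + μ) =
    (-Complex.exp (-((Real.pi : ℂ) * Complex.I * μ) - 2 * (Real.pi : ℂ) * Complex.I * lam))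
      * theta4 μ lam := by
  unfold theta4
  refine tsum_shift_eq _ fun m => ?_
  push_cast
  have h : ((Real.pi : ℂ) * Complex.I * μ * (m : ℂ)^2
      + 2 * (Real.pi : ℂ) * Complex.I * (m : ℂ) * (lam + μ + 1/2))
      = (-((Real.pi : ℂ) * Complex.I))
      + ((-((Real.pi : ℂ) * Complex.I * μ) - 2 * (Real.pi : ℂ) * Complex.I * lam)
      + ((Real.pi : ℂ) * Complex.I * μ * ((m : ℂ) + 1)^2
      + 2 * (Real.pi : ℂ) * Complex.I * ((m : ℂ) + 1) * (lam + 1/2))) := by ring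
  rw [h, Complex.exp_add, Complex.exp_add, Complex.exp_neg, Complex.exp_pi_mul_I,
    inv_neg_one]
  ring

private lemma w1_add_one (μ lam : ℂ) : w1 μ (lam + 1) = - w1 μ lam := by
  unfold w1
  rw [theta4_add_one, theta1_add_one, div_neg]

private lemma w2_add_one (μ lam : ℂ) : w2 μ (lam + 1) = - w2 μ lam := by
  unfold w2
  rw [theta3_add_one, theta1_add_one, div_neg]

private lemma w3_add_one (μ lam : ℂ) : w3 μ (lam + 1) = w3 μ lam := by
  unfold w3
  rw [theta2_add_one, theta1_add_one, mul_neg, neg_div_neg_eq]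

private lemma w1_add_mu (μ lam : ℂ) : w1 μ (lam + μ) = w1 μ lam := by
  unfold w1
  rw [theta4_add_mu, theta1_add_mu]
  set A := Complex.exp (-((Real.pi : ℂ) * Complex.I * μ) - 2 * (Real.pi : ℂ) * Complex.I * lam)
    with hA
  have hA0 : (-A : ℂ) ≠ 0 := neg_ne_zero.mpr (Complex.exp_ne_zero _)
  rw [show (Real.pi : ℂ) * theta2 μ 0 * theta3 μ 0 * (-A * theta4 μ lam)
      = (-A) * ((Real.pi : ℂ) * theta2 μ 0 * theta3 μ 0 * theta4 μ lam) from by ring,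
    mul_div_mul_left _ _ hA0]

private lemma w2_add_mu (μ lam : ℂ) : w2 μ (lam + μ) = - w2 μ lam := by
  unfold w2
  rw [theta3_add_mu, theta1_add_mu]
  set A := Complex.exp (-((Real.pi : ℂ) * Complex.I * μ) - 2 * (Real.pi : ℂ) * Complex.I * lam)
    with hA
  have hA0 : (A : ℂ) ≠ 0 := Complex.exp_ne_zero _
  rw [show (Real.pi : ℂ) * theta2 μ 0 * theta4 μ 0 * (A * theta3 μ lam)
      = A * ((Real.pi : ℂ) * theta2 μ 0 * theta4 μ 0 * theta3 μ lam) from by ring,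
    show (-A) * theta1 μ lam = A * (-(theta1 μ lam)) from by ring,
    mul_div_mul_left _ _ hA0, div_neg]

private lemma w3_add_mu (μ lam : ℂ) : w3 μ (lam + μ) = - w3 μ lam := by
  unfold w3
  rw [theta2_add_mu, theta1_add_mu]
  set A := Complex.exp (-((Real.pi : ℂ) * Complex.I * μ) - 2 * (Real.pi : ℂ) * Complex.I * lam)
    with hA
  have hA0 : (A : ℂ) ≠ 0 := Complex.exp_ne_zero _
  rw [show (Real.pi : ℂ) * theta3 μ 0 * theta4 μ 0 * (A * theta2 μ lam)
      = A * ((Real.pi : ℂ) * theta3 μ 0 * theta4 μ 0 * theta2 μ lam) from by ring,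
    show (-A) * theta1 μ lam = A * (-(theta1 μ lam)) from by ring,
    mul_div_mul_left _ _ hA0, div_neg]

end AuxTwist


/-- twist properties of the multiplier
`f(λ) = ½I + Σ_a J_a w_a(λ−m) σ_a` of the elementary elliptic Schlesinger
transformation: `f(λ+1) = σ₃ f(λ) σ₃` and `f(λ+μ) = σ₁ f(λ) σ₁`. -/
theorem f_twist_properties (μ : ℂ) (hμ : 0 < μ.im) (J : Fin 3 → ℂ) (m : ℂ)
    (f : ℂ → Matrix (Fin 2) (Fin 2) ℂ)
    (hf : ∀ lam : ℂ, f lam = (1/2 : ℂ) • (1 : Matrix (Fin 2) (Fin 2) ℂ)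
        + ∑ a : Fin 3, (J a * wA μ a (lam - m)) • pauli a)
    (lam : ℂ) (hlam : ¬ inLattice μ (lam - m)) :
    f (lam + 1) = sigma3 * f lam * sigma3 ∧ f (lam + μ) = sigma1 * f lam * sigma1 := by
  have e1 : lam + 1 - m = (lam - m) + 1 := by ring
  have e2 : lam + μ - m = (lam - m) + μ := by ring
  constructor
  · rw [hf, hf, e1]
    simp only [wA, Fin.sum_univ_three, Matrix.cons_val_zero, Matrix.cons_val_one,
      Matrix.head_cons, Fin.isValue, Matrix.cons_val_two, Matrix.tail_cons]
    rw [w1_add_one, w2_add_one, w3_add_one]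
    ext i j
    fin_cases i <;> fin_cases j <;>
      simp [pauli, sigma1, sigma2, sigma3, Matrix.mul_apply, Matrix.vecMul,
        dotProduct, Fin.sum_univ_two, Matrix.one_apply, Matrix.add_apply,
        Matrix.smul_apply] <;> ring
  · rw [hf, hf, e2]
    simp only [wA, Fin.sum_univ_three, Matrix.cons_val_zero, Matrix.cons_val_one,
      Matrix.head_cons, Fin.isValue, Matrix.cons_val_two, Matrix.tail_cons]
    rw [w1_add_mu, w2_add_mu, w3_add_mu]
    ext i j
    fin_cases i <;> fin_cases j <;>
      simp [pauli, sigma1, sigma2, sigma3, Matrix.mul_apply, Matrix.vecMul,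
        dotProduct, Fin.sum_univ_two, Matrix.one_apply, Matrix.add_apply,
        Matrix.smul_apply] <;> ring
end
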